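/- arXiv:2201.07695 — 4 statements merged into one kernel-verified Lean document; each statement's English description precedes it below -/
import Mathlib

section
/- (Random coding bound, Theorem 1.) Consider a codebook of M codewords of length L where each symbol is i.i.d. uniform on {1,...,Q}, K_a transmitted messages chosen i.i.d. uniform on {1,...,M}, and output lists Y_1,...,Y_L in which each transmitted symbol is missed independently with probability p_m and each non-transmitted symbol is falsely included independently with probability p_f. The decoder outputs all messages whose codewords miss the lists in at most t positions. Then the expected number of falsely accepted messages is at most Σ_{r=1}^{K_a} ν_r (M-r) Σ_{i=0}^{t} C(L,i)(1-μ_r)^i μ_r^{L-i}, where μ_r = (1-((Q-1)/Q)^r)(1-p_m) + ((Q-1)/Q)^r p_f and ν_r = C(M,r) Σ_{i=0}^{r} (-1)^i C(r,i)((r-i)/M)^{K_a}. -/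
open Finset

/-- Whether symbol `e` is among the transmitted symbols in slot `i`. -/
def transmitted {M L Q Ka : ℕ} (C : Fin M → Fin L → Fin Q) (W : Fin Ka → Fin M)
    (i : Fin L) (e : Fin Q) : Bool :=
  decide (∃ u, C (W u) i = e)

/-- Whether symbol `e` appears in the received list of slot `i`: a transmitted symbol
survives unless the miss-bit fires, a non-transmitted symbol appears if the
false-alarm bit fires. -/
def inList {M L Q Ka : ℕ} (C : Fin M → Fin L → Fin Q) (W : Fin Ka → Fin M)
    (n : Fin L → Fin Q → Bool × Bool) (i : Fin L) (e : Fin Q) : Bool :=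
  (transmitted C W i e && !(n i e).1) || (!transmitted C W i e && (n i e).2)

/-- Number of slots in which the codeword of message `mm` misses the received list. -/
def missCount {M L Q Ka : ℕ} (C : Fin M → Fin L → Fin Q) (W : Fin Ka → Fin M)
    (n : Fin L → Fin Q → Bool × Bool) (mm : Fin M) : ℕ :=
  (Finset.univ.filter (fun i : Fin L => inList C W n i (C mm i) = false)).card

/-- Probability weight of a noise realization: miss bits are Bernoulli(`p_m`),
false-alarm bits are Bernoulli(`p_f`), all independent. -/
def noiseWeight {L Q : ℕ} (pm pf : ℝ) (n : Fin L → Fin Q → Bool × Bool) : ℝ :=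
  ∏ i : Fin L, ∏ e : Fin Q,
    ((if (n i e).1 then pm else 1 - pm) * (if (n i e).2 then pf else 1 - pf))

lemma aux_binom {S : Type*} [Fintype S] [DecidableEq S] (w : S → ℝ) (bad : S → Bool)
    (L t : ℕ) (ht : t ≤ L) :
    ∑ g : Fin L → S, (∏ i, w (g i)) *
        (if (univ.filter fun i => bad (g i) = true).card ≤ t then (1:ℝ) else 0)
      = ∑ i ∈ Finset.range (t+1), (L.choose i : ℝ) *
          (∑ s ∈ univ.filter (fun s => bad s = true), w s) ^ i *
          (∑ s ∈ univ.filter (fun s => bad s = false), w s) ^ (L - i) := by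
  set β := ∑ s ∈ univ.filter (fun s => bad s = true), w s with hβ
  set γ := ∑ s ∈ univ.filter (fun s => bad s = false), w s with hγ
  have h1 : ∀ g : Fin L → S,
      (∏ i, w (g i)) * (if (univ.filter fun i => bad (g i) = true).card ≤ t then (1:ℝ) else 0)
      = ∑ A ∈ (univ : Finset (Fin L)).powerset,
          if (univ.filter fun i => bad (g i) = true) = A then
            (∏ i, w (g i)) * (if A.card ≤ t then (1:ℝ) else 0) else 0 := by
    intro g
    rw [Finset.sum_ite_eq (univ : Finset (Fin L)).powerset
      (univ.filter fun i => bad (g i) = true)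
      (fun A => (∏ i, w (g i)) * (if A.card ≤ t then (1:ℝ) else 0))]
    rw [if_pos (Finset.mem_powerset.2 (Finset.subset_univ _))]
  simp_rw [h1]
  rw [Finset.sum_comm]
  have h2 : ∀ A ∈ (univ : Finset (Fin L)).powerset,
      (∑ g : Fin L → S, if (univ.filter fun i => bad (g i) = true) = A then
          (∏ i, w (g i)) * (if A.card ≤ t then (1:ℝ) else 0) else 0)
      = (if A.card ≤ t then (1:ℝ) else 0) * β ^ A.card * γ ^ (L - A.card) := by
    intro A _
    have hmem : ∀ g : Fin L → S, ((univ.filter fun i => bad (g i) = true) = A)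
        ↔ g ∈ Fintype.piFinset (fun i => if i ∈ A then univ.filter (fun s => bad s = true)
            else univ.filter (fun s => bad s = false)) := by
      intro g
      rw [Fintype.mem_piFinset, Finset.ext_iff]
      constructor
      · intro h i
        have hti : bad (g i) = true ↔ i ∈ A := by simpa using h i
        by_cases hi : i ∈ A
        · simp [hi, hti.2 hi]
        · have hf : bad (g i) = false := by
            cases hb : bad (g i)
            · rfl
            · exact absurd (hti.1 hb) hi
          simp [hi, hf]
      · intro h i
        have := h i
        by_cases hi : i ∈ A <;> simp [hi] at this <;> simp [hi, this]
    calc (∑ g : Fin L → S, if (univ.filter fun i => bad (g i) = true) = A then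
          (∏ i, w (g i)) * (if A.card ≤ t then (1:ℝ) else 0) else 0)
        = ∑ g ∈ Fintype.piFinset (fun i => if i ∈ A then univ.filter (fun s => bad s = true)
            else univ.filter (fun s => bad s = false)), (∏ i, w (g i)) * (if A.card ≤ t then (1:ℝ) else 0) := by
          rw [← Finset.sum_filter]
          apply Finset.sum_congr
          · ext g; simp [hmem g]
          · intro _ _; rfl
      _ = (if A.card ≤ t then (1:ℝ) else 0) * ∑ g ∈ Fintype.piFinset (fun i => if i ∈ A then univ.filter (fun s => bad s = true)
            else univ.filter (fun s => bad s = false)), (∏ i, w (g i)) := by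
          rw [Finset.mul_sum]; apply Finset.sum_congr rfl; intro _ _; ring
      _ = (if A.card ≤ t then (1:ℝ) else 0) * ∏ i : Fin L, ∑ s ∈ (if i ∈ A then univ.filter (fun s => bad s = true)
            else univ.filter (fun s => bad s = false)), w s := by
          rw [Finset.prod_univ_sum]
      _ = (if A.card ≤ t then (1:ℝ) else 0) * ∏ i : Fin L, (if i ∈ A then β else γ) := by
          congr 1; apply Finset.prod_congr rfl; intro i _; by_cases hi : i ∈ A <;> simp [hi, hβ, hγ]
      _ = (if A.card ≤ t then (1:ℝ) else 0) * (β ^ A.card * γ ^ (L - A.card)) := by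
          congr 1
          rw [Finset.prod_ite]
          have e1 : univ.filter (fun i : Fin L => i ∈ A) = A := by ext i; simp
          have e2 : univ.filter (fun i : Fin L => ¬ i ∈ A) = Aᶜ := by ext i; simp
          rw [e1, e2, Finset.prod_const, Finset.prod_const, Finset.card_compl,
            Fintype.card_fin]
      _ = _ := by ring
  rw [Finset.sum_congr rfl h2]
  rw [Finset.sum_powerset]
  have hcard : #(univ : Finset (Fin L)) = L := by simp
  have h3 : ∀ j ∈ Finset.range (#(univ : Finset (Fin L)) + 1),
      (∑ A ∈ Finset.powersetCard j (univ : Finset (Fin L)),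
        (if #A ≤ t then (1:ℝ) else 0) * β ^ #A * γ ^ (L - #A))
      = (if j ≤ t then (1:ℝ) else 0) * ((L.choose j : ℝ) * β ^ j * γ ^ (L - j)) := by
    intro j _
    rw [Finset.sum_congr rfl (fun A hA => by
      rw [(Finset.mem_powersetCard.1 hA).2])]
    rw [Finset.sum_const, Finset.card_powersetCard, hcard, nsmul_eq_mul]
    ring
  rw [Finset.sum_congr rfl h3, hcard]
  simp_rw [ite_mul, one_mul, zero_mul]
  rw [← Finset.sum_filter]
  have h4 : (Finset.range (L+1)).filter (fun j => j ≤ t) = Finset.range (t+1) := by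
    ext j; simp only [Finset.mem_filter, Finset.mem_range]; omega
  rw [h4]

noncomputable def br (pm pf : ℝ) (b : Bool × Bool) : ℝ :=
  (if b.1 then pm else 1 - pm) * (if b.2 then pf else 1 - pf)

lemma br_total (pm pf : ℝ) : ∑ b : Bool × Bool, br pm pf b = 1 := by
  simp [Fintype.sum_prod_type, br]; ring

lemma br_miss (pm pf : ℝ) :
    ∑ b ∈ univ.filter (fun b : Bool × Bool => !b.1), br pm pf b = 1 - pm := by
  simp [Finset.sum_filter, Fintype.sum_prod_type, br]; ring

lemma br_fa (pm pf : ℝ) :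
    ∑ b ∈ univ.filter (fun b : Bool × Bool => b.2), br pm pf b = pf := by
  simp [Finset.sum_filter, Fintype.sum_prod_type, br]; ring

lemma row_sum_one {Q : ℕ} (pm pf : ℝ) :
    ∑ row : Fin Q → Bool × Bool, ∏ e, br pm pf (row e) = 1 := by
  have h := Finset.prod_univ_sum (fun _ : Fin Q => (univ : Finset (Bool × Bool))) (fun _ b => br pm pf b)
  rw [Fintype.piFinset_univ] at h
  rw [← h]
  simp [br_total]

/-- conditional row sum: rows whose bit at `e0` satisfies `cond`. -/
lemma row_sum_cond {Q : ℕ} (pm pf : ℝ) (e0 : Fin Q) (cond : Bool × Bool → Bool) :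
    ∑ row ∈ univ.filter (fun row : Fin Q → Bool × Bool => cond (row e0)),
      ∏ e, br pm pf (row e)
    = ∑ b ∈ univ.filter (fun b => cond b), br pm pf b := by
  have hset : univ.filter (fun row : Fin Q → Bool × Bool => cond (row e0))
      = Fintype.piFinset (fun e => if e = e0 then univ.filter (fun b => cond b) else univ) := by
    ext row
    simp only [Finset.mem_filter, Finset.mem_univ, true_and, Fintype.mem_piFinset]
    constructor
    · intro h e
      by_cases he : e = e0 <;> simp [he, h]
    · intro h
      have := h e0
      simpa using this
  rw [hset, ← Finset.prod_univ_sum]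
  rw [← Finset.prod_erase_mul univ _ (Finset.mem_univ e0)]
  simp only [if_pos rfl]
  have : ∀ e ∈ univ.erase e0, (∑ b ∈ (if e = e0 then univ.filter (fun b => cond b) else univ), br pm pf b) = 1 := by
    intro e he
    rw [if_neg (Finset.ne_of_mem_erase he), br_total]
  rw [Finset.prod_congr rfl this, Finset.prod_const_one, one_mul]
  simp

lemma col_count {M Q Ka : ℕ} (hQ : 0 < Q) (W : Fin Ka → Fin M) (mm : Fin M)
    (hmm : ∀ u, W u ≠ mm) :
    (univ.filter (fun c : Fin M → Fin Q => ∀ u, c (W u) ≠ c mm)).card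
      = (Q-1)^(univ.image W).card * Q^(M - (univ.image W).card) := by
  classical
  set r := (univ.image W).card with hr
  have hmmim : mm ∉ univ.image W := by
    simp only [Finset.mem_image, Finset.mem_univ, true_and]
    rintro ⟨u, hu⟩; exact hmm u hu
  have hrM : r < M := by
    have h1 : (insert mm (univ.image W)).card = r + 1 := by
      rw [Finset.card_insert_of_notMem hmmim]
    have h2 : (insert mm (univ.image W)).card ≤ M := by
      simpa using Finset.card_le_univ (insert mm (univ.image W))
    omega
  rw [Finset.card_eq_sum_card_fiberwise
    (f := fun c : Fin M → Fin Q => c mm) (t := univ) (fun c _ => Finset.mem_univ _)]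
  have hfib : ∀ a : Fin Q,
      ((univ.filter (fun c : Fin M → Fin Q => ∀ u, c (W u) ≠ c mm)).filter
        (fun c => c mm = a))
      = Fintype.piFinset (fun m => if m = mm then ({a} : Finset (Fin Q))
          else if m ∈ univ.image W then univ.erase a else univ) := by
    intro a
    ext c
    simp only [Finset.mem_filter, Finset.mem_univ, true_and, Fintype.mem_piFinset]
    constructor
    · rintro ⟨h1, h2⟩ m
      by_cases hm : m = mm
      · subst hm; simp [h2]
      · rw [if_neg hm]
        by_cases him : m ∈ univ.image W
        · rw [if_pos him]
          obtain ⟨u, -, hu⟩ := Finset.mem_image.1 him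
          subst hu
          exact Finset.mem_erase.2 ⟨by rw [h2] at h1; exact h1 u, Finset.mem_univ _⟩
        · rw [if_neg him]; exact Finset.mem_univ _
    · intro h
      have hcm : c mm = a := by simpa using h mm
      refine ⟨fun u => ?_, hcm⟩
      have hW : W u ∈ univ.image W := Finset.mem_image.2 ⟨u, Finset.mem_univ _, rfl⟩
      have := h (W u)
      rw [if_neg (hmm u), if_pos hW] at this
      rw [hcm]
      exact (Finset.mem_erase.1 this).1
  have hcardfib : ∀ a : Fin Q,
      (Fintype.piFinset (fun m => if m = mm then ({a} : Finset (Fin Q))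
          else if m ∈ univ.image W then univ.erase a else univ)).card
      = (Q-1)^r * Q^(M - 1 - r) := by
    intro a
    rw [Fintype.card_piFinset]
    rw [← Finset.prod_erase_mul univ _ (Finset.mem_univ mm)]
    rw [if_pos rfl, Finset.card_singleton, mul_one]
    have hcongr : ∀ m ∈ univ.erase mm,
        (if m = mm then ({a} : Finset (Fin Q))
          else if m ∈ univ.image W then univ.erase a else univ).card
        = if m ∈ univ.image W then Q - 1 else Q := by
      intro m hm
      rw [if_neg (Finset.ne_of_mem_erase hm)]
      by_cases him : m ∈ univ.image W
      · rw [if_pos him, if_pos him, Finset.card_erase_of_mem (Finset.mem_univ a)]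
        simp
      · rw [if_neg him, if_neg him]; simp
    rw [Finset.prod_congr rfl hcongr, Finset.prod_ite, Finset.prod_const, Finset.prod_const]
    have e1 : (univ.erase mm).filter (fun m => m ∈ univ.image W) = univ.image W := by
      ext m
      simp only [Finset.mem_filter, Finset.mem_erase, Finset.mem_univ, true_and, and_iff_right_iff_imp]
      intro hmem
      constructor
      · rintro rfl; exact hmmim hmem
      · trivial
    have e2 : ((univ.erase mm).filter (fun m => ¬ m ∈ univ.image W)).card = M - 1 - r := by
      have : (univ.erase mm).filter (fun m => ¬ m ∈ univ.image W)
          = (univ.erase mm) \ univ.image W := by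
        ext m; simp [Finset.mem_sdiff, Finset.mem_filter]
      rw [this, Finset.card_sdiff_of_subset]
      · rw [Finset.card_erase_of_mem (Finset.mem_univ mm)]
        simp [hr]
      · intro m hmem
        exact Finset.mem_erase.2 ⟨fun h => hmmim (h ▸ hmem), Finset.mem_univ _⟩
    rw [e1, e2]
  rw [Finset.sum_congr rfl (fun a _ => by rw [hfib a, hcardfib a])]
  rw [Finset.sum_const, Finset.card_univ, Fintype.card_fin, smul_eq_mul]
  have : M - r = (M - 1 - r) + 1 := by omega
  rw [this, pow_succ]
  ring

def slotBad {M Q Ka : ℕ} (W : Fin Ka → Fin M) (mm : Fin M)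
    (s : (Fin M → Fin Q) × (Fin Q → Bool × Bool)) : Bool :=
  !((decide (∃ u, s.1 (W u) = s.1 mm) && !(s.2 (s.1 mm)).1) ||
    (!decide (∃ u, s.1 (W u) = s.1 mm) && (s.2 (s.1 mm)).2))

noncomputable def slotW {M Q : ℕ} (pm pf : ℝ)
    (s : (Fin M → Fin Q) × (Fin Q → Bool × Bool)) : ℝ :=
  (1 / (Q:ℝ)^M) * ∏ e, br pm pf (s.2 e)

noncomputable def mu (Q : ℕ) (pm pf : ℝ) (r : ℕ) : ℝ :=
  (1 - (((Q:ℝ)-1)/(Q:ℝ))^r) * (1-pm) + (((Q:ℝ)-1)/(Q:ℝ))^r * pf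

lemma slot_total {M Q Ka : ℕ} (hQ : 0 < Q) (pm pf : ℝ) (W : Fin Ka → Fin M) (mm : Fin M) :
    ∑ s : (Fin M → Fin Q) × (Fin Q → Bool × Bool), slotW pm pf s = 1 := by
  rw [Fintype.sum_prod_type]
  simp only [slotW]
  rw [Finset.sum_congr rfl (fun c _ => by
    rw [← Finset.mul_sum, row_sum_one, mul_one])]
  rw [Finset.sum_const, Finset.card_univ, Fintype.card_fun, Fintype.card_fin, Fintype.card_fin,
    nsmul_eq_mul]
  rw [Nat.cast_pow, mul_one_div, div_self]
  positivity

lemma slot_good_sum {M Q Ka : ℕ} (hQ : 0 < Q) (pm pf : ℝ) (W : Fin Ka → Fin M) (mm : Fin M)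
    (hmm : ∀ u, W u ≠ mm) (hrM : (univ.image W).card ≤ M) :
    ∑ s ∈ univ.filter (fun s : (Fin M → Fin Q) × (Fin Q → Bool × Bool) => slotBad W mm s = false),
      slotW pm pf s = mu Q pm pf (univ.image W).card := by
  classical
  set r := (univ.image W).card with hrdef
  clear_value r
  rw [Finset.sum_filter, Fintype.sum_prod_type]
  have hinner : ∀ c : Fin M → Fin Q,
      (∑ row : Fin Q → Bool × Bool,
        if slotBad (Q := Q) W mm (c, row) = false then slotW pm pf (c, row) else 0)
      = (1 / (Q:ℝ)^M) * (if ∀ u, c (W u) ≠ c mm then pf else 1 - pm) := by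
    intro c
    have hbad : ∀ row : Fin Q → Bool × Bool, (slotBad (Q := Q) W mm (c, row) = false)
        ↔ (((decide (∃ u, c (W u) = c mm) && !(row (c mm)).1) ||
            (!decide (∃ u, c (W u) = c mm) && (row (c mm)).2)) = true) := by
      intro row; simp only [slotBad, Bool.not_eq_false']
    simp_rw [slotW]
    rw [Finset.sum_congr rfl (fun row _ => by rw [if_congr (hbad row) rfl rfl])]
    rw [← Finset.sum_filter]
    rw [← Finset.mul_sum]
    rw [row_sum_cond pm pf (c mm)
      (fun b => (decide (∃ u, c (W u) = c mm) && !b.1) || (!decide (∃ u, c (W u) = c mm) && b.2))]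
    congr 1
    by_cases htx : ∃ u, c (W u) = c mm
    · rw [if_neg (fun h => by obtain ⟨u, hu⟩ := htx; exact h u hu)]
      have hset : univ.filter (fun b : Bool × Bool =>
          (decide (∃ u, c (W u) = c mm) && !b.1 || !decide (∃ u, c (W u) = c mm) && b.2) = true)
          = univ.filter (fun b : Bool × Bool => (!b.1) = true) := by
        ext b; simp [htx]
      rw [hset]
      exact br_miss pm pf
    · rw [if_pos (fun u hu => htx ⟨u, hu⟩)]
      have hset : univ.filter (fun b : Bool × Bool =>
          (decide (∃ u, c (W u) = c mm) && !b.1 || !decide (∃ u, c (W u) = c mm) && b.2) = true)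
          = univ.filter (fun b : Bool × Bool => b.2 = true) := by
        ext b; simp [htx]
      rw [hset]
      exact br_fa pm pf
  rw [Finset.sum_congr rfl (fun c _ => hinner c)]
  rw [← Finset.mul_sum]
  rw [Finset.sum_ite, Finset.sum_const, Finset.sum_const, col_count hQ W mm hmm, ← hrdef]
  have hcard2 : (univ.filter (fun c : Fin M → Fin Q => ¬ ∀ u, c (W u) ≠ c mm)).card
      = Q^M - (Q-1)^r * Q^(M-r) := by
    have := Finset.card_filter_add_card_filter_not
      (s := (univ : Finset (Fin M → Fin Q))) (p := fun c => ∀ u, c (W u) ≠ c mm)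
    rw [col_count hQ W mm hmm, ← hrdef] at this
    rw [Finset.card_univ, Fintype.card_fun, Fintype.card_fin, Fintype.card_fin] at this
    rw [← this, Nat.add_sub_cancel_left]
  rw [hcard2, nsmul_eq_mul, nsmul_eq_mul]
  -- now pure arithmetic
  have hQ0 : (Q:ℝ) ≠ 0 := Nat.cast_ne_zero.2 hQ.ne'
  have hNle : (Q-1)^r * Q^(M-r) ≤ Q^M := by
    calc (Q-1)^r * Q^(M-r) ≤ Q^r * Q^(M-r) :=
          Nat.mul_le_mul_right _ (Nat.pow_le_pow_left (Nat.sub_le _ _) _)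
      _ = Q^M := by rw [← pow_add]; congr 1; exact Nat.add_sub_cancel' hrM
  have hN : (((Q-1)^r * Q^(M-r) : ℕ) : ℝ) = ((Q:ℝ)-1)^r * (Q:ℝ)^(M-r) := by
    push_cast [Nat.cast_sub hQ]
    ring
  have hsub : (((Q^M - (Q-1)^r * Q^(M-r) : ℕ)) : ℝ)
      = (Q:ℝ)^M - ((Q:ℝ)-1)^r * (Q:ℝ)^(M-r) := by
    rw [Nat.cast_sub hNle, hN]
    push_cast
    ring
  rw [hsub, hN]
  have hsplit : (Q:ℝ)^M = (Q:ℝ)^(M-r) * (Q:ℝ)^r := by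
    rw [← pow_add]; congr 1; exact (Nat.sub_add_cancel hrM).symm
  rw [mu, div_pow]
  rw [hsplit]
  field_simp
  ring

lemma slot_bad_sum {M Q Ka : ℕ} (hQ : 0 < Q) (pm pf : ℝ) (W : Fin Ka → Fin M) (mm : Fin M)
    (hmm : ∀ u, W u ≠ mm) (hrM : (univ.image W).card ≤ M) :
    ∑ s ∈ univ.filter (fun s : (Fin M → Fin Q) × (Fin Q → Bool × Bool) => slotBad W mm s = true),
      slotW pm pf s = 1 - mu Q pm pf (univ.image W).card := by
  have h := Finset.sum_filter_add_sum_filter_not (univ : Finset ((Fin M → Fin Q) × (Fin Q → Bool × Bool)))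
    (fun s => slotBad W mm s = true) (slotW pm pf)
  rw [slot_total hQ pm pf W mm] at h
  have hset : univ.filter (fun s : (Fin M → Fin Q) × (Fin Q → Bool × Bool) => ¬ slotBad W mm s = true)
      = univ.filter (fun s => slotBad W mm s = false) := by
    ext s; simp
  rw [hset, slot_good_sum hQ pm pf W mm hmm hrM] at h
  linarith

def slotEquiv (M L Q : ℕ) : (Fin L → ((Fin M → Fin Q) × (Fin Q → Bool × Bool))) ≃
    ((Fin M → Fin L → Fin Q) × (Fin L → Fin Q → Bool × Bool)) where
  toFun g := (fun m i => (g i).1 m, fun i => (g i).2)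
  invFun p := fun i => (fun m => p.1 m i, p.2 i)
  left_inv g := rfl
  right_inv p := rfl

lemma perW {M L Q Ka : ℕ} (t : ℕ) (hQ : 0 < Q) (ht : t ≤ L) (pm pf : ℝ)
    (W : Fin Ka → Fin M) (mm : Fin M) (hmm : ∀ u, W u ≠ mm) :
    ∑ C : Fin M → Fin L → Fin Q, ∑ n : Fin L → Fin Q → Bool × Bool,
      (1 / (Q:ℝ)^(M*L)) * noiseWeight pm pf n *
        (if missCount C W n mm ≤ t then (1:ℝ) else 0)
    = ∑ i ∈ Finset.range (t+1), (L.choose i : ℝ) *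
        (1 - mu Q pm pf (univ.image W).card) ^ i *
        (mu Q pm pf (univ.image W).card) ^ (L - i) := by
  classical
  have hrM : (univ.image W).card ≤ M := by
    simpa using Finset.card_le_univ (univ.image W)
  set F : ((Fin M → Fin L → Fin Q) × (Fin L → Fin Q → Bool × Bool)) → ℝ :=
    fun p => (1 / (Q:ℝ)^(M*L)) * noiseWeight pm pf p.2 *
      (if missCount p.1 W p.2 mm ≤ t then (1:ℝ) else 0) with hF
  have hre : ∑ C : Fin M → Fin L → Fin Q, ∑ n : Fin L → Fin Q → Bool × Bool,
      (1 / (Q:ℝ)^(M*L)) * noiseWeight pm pf n *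
        (if missCount C W n mm ≤ t then (1:ℝ) else 0)
      = ∑ g : Fin L → ((Fin M → Fin Q) × (Fin Q → Bool × Bool)), F (slotEquiv M L Q g) := by
    rw [Equiv.sum_comp (slotEquiv M L Q) F]
    exact (Fintype.sum_prod_type F).symm
  rw [hre]
  have hpt : ∀ g : Fin L → ((Fin M → Fin Q) × (Fin Q → Bool × Bool)),
      F (slotEquiv M L Q g)
      = (∏ i, slotW pm pf (g i)) *
          (if (univ.filter fun i => slotBad W mm (g i) = true).card ≤ t then (1:ℝ) else 0) := by
    intro g
    have hw : (∏ i, slotW (M := M) (Q := Q) pm pf (g i))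
        = (1 / (Q:ℝ)^(M*L)) * noiseWeight pm pf (fun i => (g i).2) := by
      simp only [slotW, noiseWeight, br]
      rw [Finset.prod_mul_distrib, Finset.prod_const, Finset.card_univ, Fintype.card_fin]
      congr 1
      rw [div_pow, one_pow, ← pow_mul]
    have hm : missCount (fun m i => (g i).1 m) W (fun i => (g i).2) mm
        = (univ.filter fun i => slotBad W mm (g i) = true).card := by
      unfold missCount
      congr 1
      apply Finset.filter_congr
      intro i _
      show (inList (fun m i => (g i).1 m) W (fun i => (g i).2) i ((g i).1 mm) = false)
        ↔ (slotBad W mm (g i) = true)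
      rw [slotBad, Bool.not_eq_true']
      rw [inList, transmitted]
    rw [hF]
    show (1 / (Q:ℝ)^(M*L)) * noiseWeight pm pf (fun i => (g i).2) *
        (if missCount (fun m i => (g i).1 m) W (fun i => (g i).2) mm ≤ t then (1:ℝ) else 0) = _
    rw [hw, hm]
  rw [Finset.sum_congr rfl (fun g _ => hpt g)]
  rw [aux_binom (slotW pm pf) (fun s => slotBad W mm s) L t ht]
  rw [slot_good_sum hQ pm pf W mm hmm hrM, slot_bad_sum hQ pm pf W mm hmm hrM]

lemma sum_powerset_neg_one_real {α : Type*} [DecidableEq α] (x : Finset α) :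
    (∑ m ∈ x.powerset, (-1:ℝ) ^ m.card) = if x = ∅ then 1 else 0 := by
  have h := Finset.sum_powerset_neg_one_pow_card (x := x)
  have : (∑ m ∈ x.powerset, (-1:ℝ)^m.card) = ((∑ m ∈ x.powerset, (-1:ℤ)^m.card : ℤ) : ℝ) := by
    push_cast; rfl
  rw [this, h]
  split <;> simp

lemma count_into {M Ka : ℕ} (B : Finset (Fin M)) :
    (univ.filter (fun W : Fin Ka → Fin M => univ.image W ⊆ B)).card = B.card ^ Ka := by
  classical
  have : univ.filter (fun W : Fin Ka → Fin M => univ.image W ⊆ B)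
      = Fintype.piFinset (fun _ : Fin Ka => B) := by
    ext W
    simp [Fintype.mem_piFinset, Finset.image_subset_iff]
  rw [this, Fintype.card_piFinset]
  simp

lemma surj_count {M Ka : ℕ} (A : Finset (Fin M)) :
    (((univ.filter (fun W : Fin Ka → Fin M => univ.image W = A)).card : ℝ))
      = ∑ i ∈ Finset.range (A.card + 1),
          (-1:ℝ)^i * (A.card.choose i : ℝ) * ((A.card : ℝ) - (i:ℝ))^Ka := by
  classical
  rw [← Finset.sum_boole]
  have step1 : ∀ W : Fin Ka → Fin M,
      (if univ.image W = A then (1:ℝ) else 0)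
      = ∑ T ∈ A.powerset, (if univ.image W ⊆ A \ T then ((-1:ℝ)^T.card) else 0) := by
    intro W
    by_cases hsub : univ.image W ⊆ A
    · have hiff : ∀ T ∈ A.powerset, (univ.image W ⊆ A \ T ↔ T ∈ (A \ univ.image W).powerset) := by
        intro T hT
        rw [Finset.mem_powerset] at hT ⊢
        rw [Finset.subset_sdiff, Finset.subset_sdiff]
        constructor
        · rintro ⟨-, hd⟩; exact ⟨hT, hd.symm⟩
        · rintro ⟨-, hd⟩; exact ⟨hsub, hd.symm⟩
      rw [Finset.sum_congr rfl (fun T hT => by rw [if_congr (hiff T hT) rfl rfl])]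
      rw [Finset.sum_ite_mem]
      have hinter : A.powerset ∩ (A \ univ.image W).powerset = (A \ univ.image W).powerset := by
        rw [Finset.inter_eq_right]
        exact Finset.powerset_mono.2 (Finset.sdiff_subset)
      rw [hinter, sum_powerset_neg_one_real]
      refine if_congr ?_ rfl rfl
      rw [Finset.sdiff_eq_empty_iff_subset]
      constructor
      · intro h; rw [h]
      · intro h; exact Finset.Subset.antisymm hsub h
    · rw [if_neg (fun h => hsub (le_of_eq h))]
      rw [Finset.sum_eq_zero]
      intro T hT
      rw [if_neg (fun h => hsub (h.trans Finset.sdiff_subset))]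
  rw [Finset.sum_congr rfl (fun W _ => step1 W)]
  rw [Finset.sum_comm]
  have step2 : ∀ T ∈ A.powerset,
      (∑ W : Fin Ka → Fin M, if univ.image W ⊆ A \ T then ((-1:ℝ)^T.card) else 0)
      = (-1:ℝ)^T.card * ((A.card - T.card : ℕ) : ℝ)^Ka := by
    intro T hT
    rw [← Finset.sum_filter, Finset.sum_const, nsmul_eq_mul, count_into]
    rw [Finset.card_sdiff_of_subset (Finset.mem_powerset.1 hT)]
    push_cast
    ring
  rw [Finset.sum_congr rfl step2]
  rw [Finset.sum_powerset]
  apply Finset.sum_congr rfl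
  intro j hj
  rw [Finset.sum_congr rfl (fun T hT => by rw [(Finset.mem_powersetCard.1 hT).2])]
  rw [Finset.sum_const, Finset.card_powersetCard, nsmul_eq_mul]
  rw [Nat.cast_sub (by rw [Finset.mem_range] at hj; omega)]
  ring

/-- Random coding bound (Theorem 1): the expected number of falsely accepted messages
(messages not transmitted whose codeword misses the lists in at most `t` positions),
over the random codebook, random messages and channel noise, is at most
`Σ_{r=1}^{K_a} ν_r (M-r) Σ_{i=0}^{t} C(L,i)(1-μ_r)^i μ_r^{L-i}`. -/
theorem stmt8 (M L Q Ka t : ℕ) (hM : 0 < M) (hL : 0 < L) (hQ : 0 < Q) (hKa : 0 < Ka)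
    (hKaM : Ka ≤ M) (ht : t ≤ L) (pm pf : ℝ)
    (hpm : pm ∈ Set.Icc (0 : ℝ) 1) (hpf : pf ∈ Set.Icc (0 : ℝ) 1) :
    (∑ C : Fin M → Fin L → Fin Q, ∑ W : Fin Ka → Fin M, ∑ n : Fin L → Fin Q → Bool × Bool,
      ((1 / (Q : ℝ) ^ (M * L)) * (1 / (M : ℝ) ^ Ka) * noiseWeight pm pf n) *
        ((Finset.univ.filter (fun mm : Fin M =>
            (∀ u, W u ≠ mm) ∧ missCount C W n mm ≤ t)).card : ℝ))
    ≤ ∑ r ∈ Finset.Icc 1 Ka,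
        ((M.choose r : ℝ) *
          ∑ i ∈ Finset.range (r + 1),
            (-1 : ℝ) ^ i * (r.choose i : ℝ) * (((r : ℝ) - (i : ℝ)) / (M : ℝ)) ^ Ka) *
        ((M : ℝ) - (r : ℝ)) *
        ∑ i ∈ Finset.range (t + 1),
          (L.choose i : ℝ) *
            (1 - ((1 - (((Q : ℝ) - 1) / (Q : ℝ)) ^ r) * (1 - pm)
                    + (((Q : ℝ) - 1) / (Q : ℝ)) ^ r * pf)) ^ i *
            ((1 - (((Q : ℝ) - 1) / (Q : ℝ)) ^ r) * (1 - pm)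
                    + (((Q : ℝ) - 1) / (Q : ℝ)) ^ r * pf) ^ (L - i) := by
  classical
  apply le_of_eq
  set tail : ℕ → ℝ := fun r => ∑ i ∈ Finset.range (t+1), (L.choose i : ℝ) *
      (1 - mu Q pm pf r) ^ i * (mu Q pm pf r) ^ (L - i) with htail
  set nu : ℕ → ℝ := fun r => ∑ i ∈ Finset.range (r + 1),
      (-1:ℝ)^i * (r.choose i : ℝ) * ((r : ℝ) - (i:ℝ))^Ka with hnu
  set G : ℕ → ℝ := fun r => (1 / (M : ℝ) ^ Ka) * ((M - r : ℕ) : ℝ) * tail r with hG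
  have hnuapp : ∀ r : ℕ, (∑ i ∈ Finset.range (r + 1),
      (-1:ℝ)^i * (r.choose i : ℝ) * ((r : ℝ) - (i:ℝ))^Ka) = nu r := fun r => rfl
  have htaileq : ∀ r : ℕ, tail r = ∑ i ∈ Finset.range (t + 1),
      (L.choose i : ℝ) *
        (1 - ((1 - (((Q : ℝ) - 1) / (Q : ℝ)) ^ r) * (1 - pm)
                + (((Q : ℝ) - 1) / (Q : ℝ)) ^ r * pf)) ^ i *
        ((1 - (((Q : ℝ) - 1) / (Q : ℝ)) ^ r) * (1 - pm)
                + (((Q : ℝ) - 1) / (Q : ℝ)) ^ r * pf) ^ (L - i) := fun r => rfl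
  -- Step 1: per-W evaluation
  have step1 : ∀ W : Fin Ka → Fin M,
      (∑ C : Fin M → Fin L → Fin Q, ∑ n : Fin L → Fin Q → Bool × Bool,
        ((1 / (Q : ℝ) ^ (M * L)) * (1 / (M : ℝ) ^ Ka) * noiseWeight pm pf n) *
          ((Finset.univ.filter (fun mm : Fin M =>
              (∀ u, W u ≠ mm) ∧ missCount C W n mm ≤ t)).card : ℝ))
      = G (univ.image W).card := by
    intro W
    have hcardexp : ∀ (C : Fin M → Fin L → Fin Q) (n : Fin L → Fin Q → Bool × Bool),
        ((Finset.univ.filter (fun mm : Fin M =>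
            (∀ u, W u ≠ mm) ∧ missCount C W n mm ≤ t)).card : ℝ)
        = ∑ mm ∈ univ.filter (fun mm : Fin M => ∀ u, W u ≠ mm),
            (if missCount C W n mm ≤ t then (1:ℝ) else 0) := by
      intro C n
      rw [Finset.sum_filter, ← Finset.sum_boole]
      apply Finset.sum_congr rfl
      intro mm _
      by_cases h1 : ∀ u, W u ≠ mm <;> by_cases h2 : missCount C W n mm ≤ t <;>
        simp [h1, h2]
    simp_rw [hcardexp, Finset.mul_sum]
    rw [Finset.sum_congr rfl (fun C (_ : C ∈ univ) => Finset.sum_comm)]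
    rw [Finset.sum_comm]
    have hterm : ∀ mm ∈ univ.filter (fun mm : Fin M => ∀ u, W u ≠ mm),
        (∑ C : Fin M → Fin L → Fin Q, ∑ n : Fin L → Fin Q → Bool × Bool,
          ((1 / (Q : ℝ) ^ (M * L)) * (1 / (M : ℝ) ^ Ka) * noiseWeight pm pf n) *
            (if missCount C W n mm ≤ t then (1:ℝ) else 0))
        = (1 / (M : ℝ) ^ Ka) * tail (univ.image W).card := by
      intro mm hmm'
      have hne : ∀ u, W u ≠ mm := (Finset.mem_filter.1 hmm').2
      have hperW := perW (M := M) (L := L) t hQ ht pm pf W mm hne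
      calc (∑ C : Fin M → Fin L → Fin Q, ∑ n : Fin L → Fin Q → Bool × Bool,
          ((1 / (Q : ℝ) ^ (M * L)) * (1 / (M : ℝ) ^ Ka) * noiseWeight pm pf n) *
            (if missCount C W n mm ≤ t then (1:ℝ) else 0))
          = (1 / (M : ℝ) ^ Ka) *
            ∑ C : Fin M → Fin L → Fin Q, ∑ n : Fin L → Fin Q → Bool × Bool,
              (1 / (Q:ℝ)^(M*L)) * noiseWeight pm pf n *
                (if missCount C W n mm ≤ t then (1:ℝ) else 0) := by
            rw [Finset.mul_sum]
            apply Finset.sum_congr rfl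
            intro C _
            rw [Finset.mul_sum]
            apply Finset.sum_congr rfl
            intro n _
            ring
        _ = (1 / (M : ℝ) ^ Ka) * tail (univ.image W).card := by rw [hperW]
    rw [Finset.sum_congr rfl hterm, Finset.sum_const]
    have hscard : (univ.filter (fun mm : Fin M => ∀ u, W u ≠ mm)).card
        = M - (univ.image W).card := by
      have hc : univ.filter (fun mm : Fin M => ∀ u, W u ≠ mm) = (univ.image W)ᶜ := by
        ext mm
        simp [Finset.mem_compl, Finset.mem_image, eq_comm]
      rw [hc, Finset.card_compl, Fintype.card_fin]
    rw [hscard, nsmul_eq_mul, hG]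
    ring
  -- Step 2: group over the image of W
  rw [Finset.sum_comm]
  rw [Finset.sum_congr rfl (fun W (_ : W ∈ univ) => step1 W)]
  have step2 : ∑ W : Fin Ka → Fin M, G (univ.image W).card
      = ∑ A ∈ (univ : Finset (Fin M)).powerset,
          ((univ.filter (fun W : Fin Ka → Fin M => univ.image W = A)).card : ℝ) * G A.card := by
    have h1 : ∀ W : Fin Ka → Fin M, G (univ.image W).card
        = ∑ A ∈ (univ : Finset (Fin M)).powerset,
            if univ.image W = A then G A.card else 0 := by
      intro W
      rw [Finset.sum_ite_eq (univ : Finset (Fin M)).powerset (univ.image W)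
        (fun A => G A.card)]
      rw [if_pos (Finset.mem_powerset.2 (Finset.subset_univ _))]
    rw [Finset.sum_congr rfl (fun W _ => h1 W), Finset.sum_comm]
    apply Finset.sum_congr rfl
    intro A _
    rw [← Finset.sum_filter, Finset.sum_const, nsmul_eq_mul]
  rw [step2]
  rw [Finset.sum_congr rfl (fun A (_ : A ∈ (univ : Finset (Fin M)).powerset) =>
    by rw [surj_count A, hnuapp A.card])]
  rw [Finset.sum_powerset]
  rw [Finset.sum_congr rfl (fun j (_ : j ∈ Finset.range (#(univ : Finset (Fin M)) + 1)) =>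
    Finset.sum_congr rfl (fun A hA => by rw [(Finset.mem_powersetCard.1 hA).2]))]
  rw [Finset.sum_congr rfl (fun j (_ : j ∈ Finset.range (#(univ : Finset (Fin M)) + 1)) => by
    rw [Finset.sum_const, Finset.card_powersetCard, nsmul_eq_mul])]
  have hMuniv : #(univ : Finset (Fin M)) = M := by simp
  rw [hMuniv]
  -- Step 3: restrict the range and match terms
  have hnu0 : nu 0 = 0 := by
    rw [hnu]
    simp [zero_pow hKa.ne']
  have hnularge : ∀ j, Ka < j → j ≤ M → nu j = 0 := by
    intro j h1 h2
    obtain ⟨A, hAsub, hAcard⟩ := Finset.exists_subset_card_eq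
      (s := (univ : Finset (Fin M))) (n := j) (by simpa using h2)
    have h0 : (univ.filter (fun W : Fin Ka → Fin M => univ.image W = A)).card = 0 := by
      rw [Finset.card_eq_zero, Finset.filter_eq_empty_iff]
      intro W _
      intro hW
      have hle := Finset.card_image_le (s := (univ : Finset (Fin Ka))) (f := W)
      rw [hW, hAcard] at hle
      rw [Finset.card_univ, Fintype.card_fin] at hle
      omega
    have h2' := surj_count (Ka := Ka) A
    rw [hAcard] at h2'
    rw [← hnuapp j, ← h2', h0, Nat.cast_zero]
  calc ∑ j ∈ Finset.range (M+1), (M.choose j : ℝ) * (nu j * G j)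
      = ∑ j ∈ Finset.Icc 1 Ka, (M.choose j : ℝ) * (nu j * G j) := by
        refine (Finset.sum_subset ?_ ?_).symm
        · intro r hr
          rw [Finset.mem_Icc] at hr
          rw [Finset.mem_range]
          omega
        · intro j hj hnj
          rw [Finset.mem_range] at hj
          rw [Finset.mem_Icc] at hnj
          push_neg at hnj
          rcases Nat.eq_zero_or_pos j with h0 | h0
          · rw [h0, hnu0]; ring
          · rw [hnularge j (hnj h0) (by omega)]; ring
    _ = _ := by
        apply Finset.sum_congr rfl
        intro r hr
        rw [Finset.mem_Icc] at hr
        have hrM : r ≤ M := le_trans hr.2 hKaM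
        have hdiv : ∑ i ∈ Finset.range (r+1),
            (-1:ℝ)^i * (r.choose i : ℝ) * (((r:ℝ)-(i:ℝ))/(M:ℝ))^Ka
            = nu r * (1/(M:ℝ)^Ka) := by
          rw [← hnuapp r, Finset.sum_mul]
          apply Finset.sum_congr rfl
          intro i _
          rw [div_pow]
          ring
        rw [hdiv, ← htaileq r, hG]
        show (M.choose r : ℝ) * (nu r * ((1 / (M : ℝ) ^ Ka) * ((M - r : ℕ) : ℝ) * tail r))
          = ((M.choose r : ℝ) * (nu r * (1/(M:ℝ)^Ka))) * ((M:ℝ) - (r:ℝ)) * tail r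
        rw [Nat.cast_sub hrM]
        ring
end

section
/- With the notation of Theorem 1 and its corollary, the false-alarm rate satisfies P_f ≤ (M-K_a) Σ_{i=0}^{t} C(L,i)(1-μ_{K_a})^i μ_{K_a}^{L-i} + p', where p' = 1 - Π_{i=0}^{K_a-1}(1 - i/M) is the probability that the K_a i.i.d. uniform messages are not all distinct, assuming μ_r ≤ μ_{K_a} for all r ≤ K_a. -/
open Finset

/-- `μ_r`: probability that a fixed symbol of a fresh random codeword appears in the
output list when `r` distinct codewords were transmitted. -/
noncomputable def muR (Q : ℕ) (pm pf : ℝ) (r : ℕ) : ℝ :=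
  (1 - (((Q : ℝ) - 1) / (Q : ℝ)) ^ r) * (1 - pm) + (((Q : ℝ) - 1) / (Q : ℝ)) ^ r * pf

/-!
For fixed transmitted messages `W`, split `(C, n)` into `L` independent slots, slot `i` being the
column `C · i` together with the noise `n i`. If the messages `W` are distinct and `mm` is not
among them, the symbol of `mm` in a slot collides with one of the `K_a` independent uniform
transmitted symbols with probability `1 - ((Q-1)/Q)^{K_a}`; it is then missed iff it is erased
(probability `p_m`), and otherwise iff it is not falsely inserted (probability `1 - p_f`). So each
slot misses it independently with probability `1 - μ_{K_a}`, its miss count is binomial, and a union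
bound over the `M - K_a` candidates `mm` gives the first term. Messages that are not all distinct
occur with probability `p'`, and there the false-alarm probability is bounded by `1`.
-/

lemma sum_pi_prod_mul_card_filter {ι α : Type*} [Fintype ι] [DecidableEq ι] [Fintype α]
    (w : α → ℝ) (A : α → Prop) [DecidablePred A] {p q : ℝ}
    (hp : ∑ x with A x, w x = p) (hq : ∑ x with ¬A x, w x = q) (f : ℕ → ℝ) :
    ∑ g : ι → α, (∏ i, w (g i)) * f #{i | A (g i)} =
      ∑ k ∈ range (Fintype.card ι + 1),
        (Fintype.card ι).choose k * p ^ k * q ^ (Fintype.card ι - k) * f k := by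
  have fiber (S : Finset ι) :
      ∑ g : ι → α, (∏ i, w (g i)) * (if ({i | A (g i)} : Finset ι) = S then 1 else 0) =
        p ^ #S * q ^ (Fintype.card ι - #S) := by
    calc ∑ g : ι → α, (∏ i, w (g i)) * (if ({i | A (g i)} : Finset ι) = S then 1 else 0)
        = ∑ g : ι → α, ∏ i, (if (A (g i) ↔ i ∈ S) then w (g i) else 0) := by
          refine sum_congr rfl fun g _ => ?_
          have : (if ({i | A (g i)} : Finset ι) = S then (1 : ℝ) else 0) =
              ∏ i, if (A (g i) ↔ i ∈ S) then 1 else 0 := by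
            rw [Fintype.prod_boole]
            exact if_congr (by simp [Finset.ext_iff]) rfl rfl
          rw [this, ← prod_mul_distrib]
          simp only [mul_ite, mul_one, mul_zero]
      _ = ∏ i, ∑ x, (if (A x ↔ i ∈ S) then w x else 0) :=
          (Fintype.prod_sum fun i x => if (A x ↔ i ∈ S) then w x else 0).symm
      _ = ∏ i, if i ∈ S then p else q := by
          refine prod_congr rfl fun i _ => ?_
          split_ifs with hi <;> simp only [hi, iff_true, iff_false, ← hp, ← hq, sum_filter]
      _ = p ^ #S * q ^ (Fintype.card ι - #S) := by
          rw [prod_ite, prod_const, prod_const, ← card_compl]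
          simp [compl_eq_univ_sdiff, filter_not]
  calc ∑ g : ι → α, (∏ i, w (g i)) * f #{i | A (g i)}
      = ∑ S : Finset ι, ∑ g : ι → α,
          (∏ i, w (g i)) * (if ({i | A (g i)} : Finset ι) = S then 1 else 0) * f #S := by
        rw [sum_comm]
        refine sum_congr rfl fun g _ => ?_
        simp only [mul_ite, mul_one, mul_zero, ite_mul, zero_mul, sum_ite_eq, mem_univ, if_true]
    _ = ∑ S ∈ (univ : Finset ι).powerset, p ^ #S * q ^ (Fintype.card ι - #S) * f #S := by
        rw [powerset_univ]
        refine sum_congr rfl fun S _ => ?_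
        rw [← fiber, sum_mul]
    _ = _ := by
        rw [sum_powerset_apply_card (fun k => p ^ k * q ^ (Fintype.card ι - k) * f k), card_univ]
        refine sum_congr rfl fun k _ => ?_
        rw [nsmul_eq_mul]; ring

lemma sum_pi_prod_mul_apply {ι α : Type*} [Fintype ι] [DecidableEq ι] [Fintype α] {w : α → ℝ}
    (hw : ∑ x, w x = 1) (j : ι) (F : α → ℝ) :
    ∑ g : ι → α, (∏ i, w (g i)) * F (g j) = ∑ x, w x * F x := by
  calc ∑ g : ι → α, (∏ i, w (g i)) * F (g j)
      = ∑ g : ι → α, ∏ i, w (g i) * (if i = j then F (g i) else 1) := by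
        simp only [prod_mul_distrib, Fintype.prod_ite_eq']
    _ = ∏ i, ∑ x, w x * (if i = j then F x else 1) :=
        (Fintype.prod_sum fun i x => w x * if i = j then F x else 1).symm
    _ = ∑ x, w x * F x := by
        rw [Fintype.prod_eq_single j fun i hi => by simp [hi, hw]]
        simp

lemma sum_pi_inv_card_pow (ι α : Type*) [Fintype ι] [DecidableEq ι] [Fintype α] [Nonempty α] :
    ∑ _c : ι → α, (Fintype.card α : ℝ)⁻¹ ^ Fintype.card ι = 1 := by
  rw [sum_const, card_univ, Fintype.card_fun, nsmul_eq_mul]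
  push_cast
  rw [← mul_pow, mul_inv_cancel₀ (by positivity), one_pow]

lemma sum_pi_inv_card_pow_mul_forall_ne {ι κ α : Type*} [Fintype ι] [DecidableEq ι] [Fintype κ]
    [Fintype α] [DecidableEq α] [Nonempty α] {W : κ → ι} (hW : Function.Injective W) {j : ι}
    (hj : ∀ u, W u ≠ j) :
    ∑ c : ι → α, (Fintype.card α : ℝ)⁻¹ ^ Fintype.card ι *
        (if ∀ u, c (W u) ≠ c j then 1 else 0) =
      (1 - (Fintype.card α : ℝ)⁻¹) ^ Fintype.card κ := by
  set s : ℝ := (Fintype.card α : ℝ)⁻¹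
  have hs : (Fintype.card α : ℝ) * s = 1 := mul_inv_cancel₀ (by positivity)
  set R : Finset ι := univ.map ⟨W, hW⟩
  have hjR : j ∉ R := by simpa [R] using hj
  -- Splitting according to the value `e` of `c j` turns the indicator into a sum over `e` of
  -- products of one-coordinate factors.
  let φ (e : α) (i : ι) (x : α) : ℝ :=
    s * (if i = j then (if x = e then 1 else 0) else 1) *
      (if i ∈ R then (if x = e then 0 else 1) else 1)
  have split (c : ι → α) :
      s ^ Fintype.card ι * (if ∀ u, c (W u) ≠ c j then 1 else 0) = ∑ e, ∏ i, φ e i (c i) := by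
    simp only [φ, prod_mul_distrib, prod_const, card_univ, Fintype.prod_ite_eq',
      Fintype.prod_ite_mem, R, prod_map]
    simp [ite_mul, ← Fintype.prod_boole]
  have coord (e : α) (i : ι) :
      ∑ x, φ e i x = (if i = j then s else 1) * (if i ∈ R then 1 - s else 1) := by
    by_cases hi : i = j
    · subst hi; simp [φ, hjR]
    by_cases hiR : i ∈ R
    · simp only [φ, hi, hiR, if_true, if_false, mul_one, one_mul, mul_ite, mul_zero]
      rw [← hs, ← Fintype.sum_ite_eq' e (fun _ => s), ← card_univ, ← nsmul_eq_mul, ← sum_const,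
        ← sum_sub_distrib]
      exact sum_congr rfl fun x _ => by split_ifs <;> simp
    · simp [φ, hi, hiR, hs]
  calc ∑ c : ι → α, s ^ Fintype.card ι * (if ∀ u, c (W u) ≠ c j then 1 else 0)
      = ∑ e, ∏ i, ∑ x, φ e i x := by
        simp only [split]
        rw [sum_comm]
        exact sum_congr rfl fun e _ => (Fintype.prod_sum (φ e)).symm
    _ = (1 - s) ^ Fintype.card κ := by
        simp only [coord, prod_mul_distrib, Fintype.prod_ite_eq', Fintype.prod_ite_mem,
          prod_const, R, card_map, card_univ]
        rw [sum_const, card_univ, nsmul_eq_mul, ← mul_assoc, hs, one_mul]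

def symbolWeight (pm pf : ℝ) (x : Bool × Bool) : ℝ :=
  (if x.1 then pm else 1 - pm) * (if x.2 then pf else 1 - pf)

lemma symbolWeight_nonneg {pm pf : ℝ} (hpm : pm ∈ Set.Icc (0 : ℝ) 1)
    (hpf : pf ∈ Set.Icc (0 : ℝ) 1) (x : Bool × Bool) : 0 ≤ symbolWeight pm pf x := by
  obtain ⟨_, _⟩ := hpm
  obtain ⟨_, _⟩ := hpf
  unfold symbolWeight
  apply mul_nonneg <;> split_ifs <;> linarith

lemma sum_symbolWeight (pm pf : ℝ) : ∑ x, symbolWeight pm pf x = 1 := by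
  simp only [symbolWeight, Fintype.sum_prod_type, Fintype.sum_bool, if_true, Bool.false_eq_true,
    if_false]
  ring

/-- One slot of a channel use: a column of the codebook and the noise flags of that slot. Under
the uniform codebook and the noise law, the `L` slots are i.i.d. with law `slotWeight`. -/
abbrev Slot (M Q : ℕ) := (Fin M → Fin Q) × (Fin Q → Bool × Bool)

noncomputable def slotWeight (M Q : ℕ) (pm pf : ℝ) (x : Slot M Q) : ℝ :=
  (Q : ℝ)⁻¹ ^ M * ∏ e, symbolWeight pm pf (x.2 e)

abbrev SlotMisses {M Q Ka : ℕ} (W : Fin Ka → Fin M) (mm : Fin M) (x : Slot M Q) : Prop :=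
  if ∃ u, x.1 (W u) = x.1 mm then (x.2 (x.1 mm)).1 = true else (x.2 (x.1 mm)).2 = false

lemma sum_slotWeight {M Q : ℕ} (hQ : 0 < Q) (pm pf : ℝ) : ∑ x, slotWeight M Q pm pf x = 1 := by
  have : Nonempty (Fin Q) := ⟨⟨0, hQ⟩⟩
  have hnoise : ∑ ν : Fin Q → Bool × Bool, ∏ e, symbolWeight pm pf (ν e) = 1 := by
    rw [← Fintype.prod_sum fun _ => symbolWeight pm pf]
    simp [sum_symbolWeight]
  calc ∑ x, slotWeight M Q pm pf x
      = ∑ _c : Fin M → Fin Q, (Q : ℝ)⁻¹ ^ M * ∑ ν : Fin Q → Bool × Bool,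
          ∏ e, symbolWeight pm pf (ν e) := by
        rw [Fintype.sum_prod_type]; simp only [slotWeight, mul_sum]
    _ = 1 := by simpa [hnoise] using sum_pi_inv_card_pow (Fin M) (Fin Q)

lemma sum_noise_mul_slotMisses {M Q Ka : ℕ} (pm pf : ℝ) (W : Fin Ka → Fin M) (mm : Fin M)
    (c : Fin M → Fin Q) :
    ∑ ν : Fin Q → Bool × Bool,
        (∏ e, symbolWeight pm pf (ν e)) * (if SlotMisses W mm (c, ν) then 1 else 0) =
      if ∃ u, c (W u) = c mm then pm else 1 - pf := by
  let F (y : Bool × Bool) : ℝ :=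
    if ∃ u, c (W u) = c mm then (if y.1 then 1 else 0) else (if y.2 then 0 else 1)
  calc ∑ ν : Fin Q → Bool × Bool,
        (∏ e, symbolWeight pm pf (ν e)) * (if SlotMisses W mm (c, ν) then 1 else 0)
      = ∑ ν : Fin Q → Bool × Bool, (∏ e, symbolWeight pm pf (ν e)) * F (ν (c mm)) := by
        refine sum_congr rfl fun ν _ => ?_
        simp only [SlotMisses, F]
        split_ifs <;> simp_all
    _ = ∑ y, symbolWeight pm pf y * F y := sum_pi_prod_mul_apply (sum_symbolWeight pm pf) _ _
    _ = _ := by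
        by_cases h : ∃ u, c (W u) = c mm <;>
          simp [F, h, symbolWeight, Fintype.sum_prod_type] <;> ring

lemma sum_slotWeight_slotMisses {M Q Ka : ℕ} (hQ : 0 < Q) (pm pf : ℝ) {W : Fin Ka → Fin M}
    (hW : Function.Injective W) {mm : Fin M} (hmm : ∀ u, W u ≠ mm) :
    ∑ x with SlotMisses W mm x, slotWeight M Q pm pf x = 1 - muR Q pm pf Ka := by
  have : Nonempty (Fin Q) := ⟨⟨0, hQ⟩⟩
  have huniform : ∑ _c : Fin M → Fin Q, (Q : ℝ)⁻¹ ^ M = 1 := by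
    simpa using sum_pi_inv_card_pow (Fin M) (Fin Q)
  have havoid : ∑ c : Fin M → Fin Q, (Q : ℝ)⁻¹ ^ M * (if ∀ u, c (W u) ≠ c mm then 1 else 0) =
      (1 - (Q : ℝ)⁻¹) ^ Ka := by
    simpa using sum_pi_inv_card_pow_mul_forall_ne (α := Fin Q) hW hmm
  calc ∑ x with SlotMisses W mm x, slotWeight M Q pm pf x
      = ∑ c : Fin M → Fin Q, (Q : ℝ)⁻¹ ^ M * ∑ ν : Fin Q → Bool × Bool,
          (∏ e, symbolWeight pm pf (ν e)) * (if SlotMisses W mm (c, ν) then 1 else 0) := by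
        simp only [sum_filter, Fintype.sum_prod_type, mul_sum, slotWeight]
        exact sum_congr rfl fun c _ => sum_congr rfl fun ν _ => by split_ifs <;> ring
    _ = pm * ∑ _c : Fin M → Fin Q, (Q : ℝ)⁻¹ ^ M + (1 - pf - pm) * ∑ c : Fin M → Fin Q,
          (Q : ℝ)⁻¹ ^ M * (if ∀ u, c (W u) ≠ c mm then 1 else 0) := by
        rw [mul_sum, mul_sum, ← sum_add_distrib]
        refine sum_congr rfl fun c _ => ?_
        rw [sum_noise_mul_slotMisses]
        by_cases h : ∀ u, c (W u) ≠ c mm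
        · rw [if_neg (not_exists.2 h), if_pos h]; ring
        · rw [if_pos (by simpa using h), if_neg h]; ring
    _ = 1 - muR Q pm pf Ka := by rw [huniform, havoid]; unfold muR; field_simp; ring

lemma inList_eq_false_iff_slotMisses {M L Q Ka : ℕ} (C : Fin M → Fin L → Fin Q)
    (W : Fin Ka → Fin M) (n : Fin L → Fin Q → Bool × Bool) (mm : Fin M) (i : Fin L) :
    inList C W n i (C mm i) = false ↔ SlotMisses W mm (fun m => C m i, n i) := by
  unfold inList transmitted SlotMisses
  by_cases h : ∃ u, C (W u) i = C mm i
  · rw [decide_eq_true h, if_pos h]; simp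
  · rw [decide_eq_false h, if_neg h]; simp

/-- Expectation over a uniform codebook `C` and the noise `n`. -/
noncomputable def codeNoiseMean (M L Q : ℕ) (pm pf : ℝ)
    (F : (Fin M → Fin L → Fin Q) → (Fin L → Fin Q → Bool × Bool) → ℝ) : ℝ :=
  ∑ C, ∑ n, 1 / (Q : ℝ) ^ (M * L) * noiseWeight pm pf n * F C n

lemma codeNoiseMean_eq_sum_slots (M L Q : ℕ) (pm pf : ℝ)
    (F : (Fin M → Fin L → Fin Q) → (Fin L → Fin Q → Bool × Bool) → ℝ) :
    codeNoiseMean M L Q pm pf F =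
      ∑ g : Fin L → Slot M Q, (∏ i, slotWeight M Q pm pf (g i)) *
        F (fun m i => (g i).1 m) (fun i => (g i).2) := by
  rw [codeNoiseMean, ← Fintype.sum_prod_type']
  refine Fintype.sum_equiv ((Equiv.arrowProdEquivProdArrow _ _ _).trans
    ((Equiv.piComm _).prodCongr (Equiv.refl _))).symm _ _ fun p => ?_
  congr 1
  simp only [slotWeight, prod_mul_distrib, prod_const, card_univ, Fintype.card_fin, noiseWeight,
    symbolWeight, one_div, ← inv_pow, pow_mul]
  rfl

lemma codeNoiseMean_const {M L Q : ℕ} (hQ : 0 < Q) (pm pf a : ℝ) :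
    codeNoiseMean M L Q pm pf (fun _ _ => a) = a := by
  rw [codeNoiseMean_eq_sum_slots, ← sum_mul, ← Fintype.prod_sum fun _ => slotWeight M Q pm pf]
  simp [sum_slotWeight hQ]

lemma codeNoiseMean_mono {M L Q : ℕ} {pm pf : ℝ} (hpm : pm ∈ Set.Icc (0 : ℝ) 1)
    (hpf : pf ∈ Set.Icc (0 : ℝ) 1)
    {F G : (Fin M → Fin L → Fin Q) → (Fin L → Fin Q → Bool × Bool) → ℝ}
    (h : ∀ C n, F C n ≤ G C n) : codeNoiseMean M L Q pm pf F ≤ codeNoiseMean M L Q pm pf G := by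
  have hn (n : Fin L → Fin Q → Bool × Bool) : 0 ≤ noiseWeight pm pf n :=
    prod_nonneg fun i _ => prod_nonneg fun e _ => symbolWeight_nonneg hpm hpf (n i e)
  unfold codeNoiseMean
  gcongr with C _ n _
  · exact mul_nonneg (by positivity) (hn n)
  · exact h C n

lemma codeNoiseMean_missCount_le {M L Q Ka t : ℕ} (hQ : 0 < Q) (ht : t ≤ L) (pm pf : ℝ)
    {W : Fin Ka → Fin M} (hW : Function.Injective W) {mm : Fin M} (hmm : ∀ u, W u ≠ mm) :
    codeNoiseMean M L Q pm pf (fun C n => if missCount C W n mm ≤ t then 1 else 0) =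
      ∑ i ∈ range (t + 1),
        (L.choose i : ℝ) * (1 - muR Q pm pf Ka) ^ i * muR Q pm pf Ka ^ (L - i) := by
  have hmiss := sum_slotWeight_slotMisses hQ pm pf hW hmm
  have hhit : ∑ x with ¬SlotMisses W mm x, slotWeight M Q pm pf x = muR Q pm pf Ka := by
    have := sum_filter_add_sum_filter_not univ (SlotMisses W mm) (slotWeight M Q pm pf)
    rw [sum_slotWeight hQ, hmiss] at this
    linarith
  have hcount (g : Fin L → Slot M Q) :
      missCount (fun m i => (g i).1 m) W (fun i => (g i).2) mm = #{i | SlotMisses W mm (g i)} :=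
    congrArg card (filter_congr fun i _ => inList_eq_false_iff_slotMisses _ _ _ _ _)
  rw [codeNoiseMean_eq_sum_slots]
  simp only [hcount]
  rw [sum_pi_prod_mul_card_filter _ _ hmiss hhit (fun k => if k ≤ t then 1 else 0),
    Fintype.card_fin]
  simp only [mul_ite, mul_one, mul_zero]
  rw [← sum_filter]
  congr 1
  ext k
  simp only [mem_filter, mem_range]
  omega

lemma muR_mem_Icc {Q : ℕ} (hQ : 0 < Q) {pm pf : ℝ} (hpm : pm ∈ Set.Icc (0 : ℝ) 1)
    (hpf : pf ∈ Set.Icc (0 : ℝ) 1) (r : ℕ) : muR Q pm pf r ∈ Set.Icc (0 : ℝ) 1 := by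
  obtain ⟨_, _⟩ := hpm
  obtain ⟨_, _⟩ := hpf
  have hq : ((Q : ℝ) - 1) / Q ∈ Set.Icc (0 : ℝ) 1 := by
    have : (1 : ℝ) ≤ Q := by exact_mod_cast hQ
    constructor
    · exact div_nonneg (by linarith) (by linarith)
    · rw [div_le_one (by linarith)]; linarith
  have : 0 ≤ (((Q : ℝ) - 1) / Q) ^ r := pow_nonneg hq.1 r
  have : (((Q : ℝ) - 1) / Q) ^ r ≤ 1 := pow_le_one₀ hq.1 hq.2
  unfold muR
  constructor <;> nlinarith

lemma ite_exists_le_sum {ι : Type*} [Fintype ι] (p : ι → Prop) [DecidablePred p]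
    [Decidable (∃ i, p i)] :
    (if ∃ i, p i then (1 : ℝ) else 0) ≤ ∑ i, if p i then 1 else 0 := by
  split_ifs with h
  · obtain ⟨i, hi⟩ := h
    calc (1 : ℝ) = if p i then 1 else 0 := (if_pos hi).symm
      _ ≤ ∑ j, if p j then 1 else 0 :=
        single_le_sum (f := fun j => if p j then (1 : ℝ) else 0) (fun j _ => by positivity)
          (mem_univ i)
  · exact sum_nonneg fun j _ => by positivity

lemma card_filter_forall_ne {ι κ : Type*} [Fintype ι] [DecidableEq ι] [Fintype κ] {W : κ → ι}
    [DecidablePred fun j => ∀ u, W u ≠ j] (hW : Function.Injective W) :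
    #{j | ∀ u, W u ≠ j} = Fintype.card ι - Fintype.card κ := by
  have : ({j | ∀ u, W u ≠ j} : Finset ι) = (univ.map ⟨W, hW⟩)ᶜ := by ext; simp
  rw [this, card_compl, card_map, card_univ]

lemma codeNoiseMean_falseAlarm_le_of_injective {M L Q Ka t : ℕ} (hQ : 0 < Q) (hKaM : Ka ≤ M)
    (ht : t ≤ L) {pm pf : ℝ} (hpm : pm ∈ Set.Icc (0 : ℝ) 1) (hpf : pf ∈ Set.Icc (0 : ℝ) 1)
    {W : Fin Ka → Fin M} (hW : Function.Injective W) :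
    codeNoiseMean M L Q pm pf
        (fun C n => if ∃ mm, (∀ u, W u ≠ mm) ∧ missCount C W n mm ≤ t then 1 else 0) ≤
      (M - Ka) * ∑ i ∈ range (t + 1),
        (L.choose i : ℝ) * (1 - muR Q pm pf Ka) ^ i * muR Q pm pf Ka ^ (L - i) := by
  set S := ∑ i ∈ range (t + 1),
    (L.choose i : ℝ) * (1 - muR Q pm pf Ka) ^ i * muR Q pm pf Ka ^ (L - i)
  calc _ ≤ codeNoiseMean M L Q pm pf (fun C n => ∑ mm,
          (if ∀ u, W u ≠ mm then 1 else 0) * (if missCount C W n mm ≤ t then 1 else 0)) :=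
        codeNoiseMean_mono hpm hpf fun C n => by
          simpa only [ite_zero_mul_ite_zero, mul_one] using
            ite_exists_le_sum fun mm => (∀ u, W u ≠ mm) ∧ missCount C W n mm ≤ t
    _ = ∑ mm, (if ∀ u, W u ≠ mm then 1 else 0) *
          codeNoiseMean M L Q pm pf (fun C n => if missCount C W n mm ≤ t then 1 else 0) := by
        simp only [codeNoiseMean, mul_sum]
        rw [sum_congr rfl fun C _ => sum_comm, sum_comm]
        exact sum_congr rfl fun mm _ => sum_congr rfl fun C _ => sum_congr rfl fun n _ => by ring
    _ = ∑ mm, (if ∀ u, W u ≠ mm then S else 0) := by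
        refine sum_congr rfl fun mm _ => ?_
        split_ifs with hmm
        · rw [one_mul, codeNoiseMean_missCount_le hQ ht pm pf hW hmm]
        · rw [zero_mul]
    _ = (M - Ka) * S := by
        rw [sum_ite, sum_const_zero, add_zero, sum_const, nsmul_eq_mul]
        simp only [card_filter_forall_ne hW, Fintype.card_fin, Nat.cast_sub hKaM]

lemma codeNoiseMean_falseAlarm_le {M L Q Ka t : ℕ} (hQ : 0 < Q) (hKaM : Ka ≤ M) (ht : t ≤ L)
    {pm pf : ℝ} (hpm : pm ∈ Set.Icc (0 : ℝ) 1) (hpf : pf ∈ Set.Icc (0 : ℝ) 1)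
    (W : Fin Ka → Fin M) :
    codeNoiseMean M L Q pm pf
        (fun C n => if ∃ mm, (∀ u, W u ≠ mm) ∧ missCount C W n mm ≤ t then 1 else 0) ≤
      (if Function.Injective W then 0 else 1) + (M - Ka) * ∑ i ∈ range (t + 1),
        (L.choose i : ℝ) * (1 - muR Q pm pf Ka) ^ i * muR Q pm pf Ka ^ (L - i) := by
  split_ifs with hW
  · simpa using codeNoiseMean_falseAlarm_le_of_injective hQ hKaM ht hpm hpf hW
  · obtain ⟨_, _⟩ := muR_mem_Icc hQ hpm hpf Ka
    have hS : 0 ≤ (M - Ka : ℝ) * ∑ i ∈ range (t + 1),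
        (L.choose i : ℝ) * (1 - muR Q pm pf Ka) ^ i * muR Q pm pf Ka ^ (L - i) := by
      refine mul_nonneg (sub_nonneg.2 (by exact_mod_cast hKaM)) (sum_nonneg fun i _ => ?_)
      exact mul_nonneg (mul_nonneg (by positivity) (pow_nonneg (by linarith) _)) (by positivity)
    calc _ ≤ codeNoiseMean M L Q pm pf (fun _ _ => 1) :=
          codeNoiseMean_mono hpm hpf fun C n => by split_ifs <;> norm_num
      _ = 1 := codeNoiseMean_const hQ pm pf 1
      _ ≤ _ := le_add_of_nonneg_right hS

lemma card_filter_injective (κ ι : Type*) [Fintype κ] [DecidableEq κ] [Fintype ι]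
    [DecidableEq ι] :
    #{W : κ → ι | Function.Injective W} = (Fintype.card ι).descFactorial (Fintype.card κ) := by
  rw [← Fintype.card_subtype, Fintype.card_congr (Equiv.subtypeInjectiveEquivEmbedding κ ι),
    Fintype.card_embedding_eq]

lemma prod_range_one_sub_div {M k : ℕ} (hM : 0 < M) (hk : k ≤ M) :
    ∏ i ∈ range k, (1 - (i : ℝ) / M) = M.descFactorial k / (M : ℝ) ^ k := by
  rw [Nat.descFactorial_eq_prod_range, Nat.cast_prod, pow_eq_prod_const, ← prod_div_distrib]
  refine prod_congr rfl fun i hi => ?_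
  rw [Nat.cast_sub (by have := mem_range.1 hi; omega)]
  field_simp

lemma sum_uniform_not_injective {M Ka : ℕ} (hM : 0 < M) (hKaM : Ka ≤ M) :
    ∑ W : Fin Ka → Fin M, 1 / (M : ℝ) ^ Ka * (if Function.Injective W then 0 else 1) =
      1 - ∏ i ∈ range Ka, (1 - (i : ℝ) / M) := by
  have (W : Fin Ka → Fin M) : (if Function.Injective W then (0 : ℝ) else 1) =
      1 - if Function.Injective W then 1 else 0 := by split_ifs <;> ring
  simp only [this, ← mul_sum, sum_sub_distrib, sum_boole, card_filter_injective, sum_const,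
    card_univ, Fintype.card_fun, Fintype.card_fin, nsmul_eq_mul, mul_one,
    prod_range_one_sub_div hM hKaM]
  push_cast
  field_simp

theorem stmt10_general (M L Q Ka t : ℕ) (hM : 0 < M) (hQ : 0 < Q)
    (hKaM : Ka ≤ M) (ht : t ≤ L) (pm pf : ℝ)
    (hpm : pm ∈ Set.Icc (0 : ℝ) 1) (hpf : pf ∈ Set.Icc (0 : ℝ) 1) :
    (∑ C : Fin M → Fin L → Fin Q, ∑ W : Fin Ka → Fin M, ∑ n : Fin L → Fin Q → Bool × Bool,
      ((1 / (Q : ℝ) ^ (M * L)) * (1 / (M : ℝ) ^ Ka) * noiseWeight pm pf n) *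
        (if ∃ mm : Fin M, (∀ u, W u ≠ mm) ∧ missCount C W n mm ≤ t then (1 : ℝ) else 0))
    ≤ ((M : ℝ) - (Ka : ℝ)) *
        (∑ i ∈ Finset.range (t + 1),
          (L.choose i : ℝ) * (1 - muR Q pm pf Ka) ^ i * (muR Q pm pf Ka) ^ (L - i))
      + (1 - ∏ i ∈ Finset.range Ka, (1 - (i : ℝ) / (M : ℝ))) := by
  set S := ∑ i ∈ range (t + 1),
    (L.choose i : ℝ) * (1 - muR Q pm pf Ka) ^ i * muR Q pm pf Ka ^ (L - i)
  calc _ = ∑ W : Fin Ka → Fin M, 1 / (M : ℝ) ^ Ka * codeNoiseMean M L Q pm pf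
          (fun C n => if ∃ mm, (∀ u, W u ≠ mm) ∧ missCount C W n mm ≤ t then 1 else 0) := by
        rw [sum_comm]
        simp only [codeNoiseMean, mul_sum]
        exact sum_congr rfl fun W _ => sum_congr rfl fun C _ => sum_congr rfl fun n _ => by ring
    _ ≤ ∑ W : Fin Ka → Fin M, 1 / (M : ℝ) ^ Ka *
          ((if Function.Injective W then 0 else 1) + (M - Ka) * S) := by
        gcongr with W
        exact codeNoiseMean_falseAlarm_le hQ hKaM ht hpm hpf W
    _ = _ := by
        rw [← sum_uniform_not_injective hM hKaM, ← mul_sum, sum_add_distrib, mul_add, mul_sum,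
          sum_const, card_univ, Fintype.card_fun, Fintype.card_fin, Fintype.card_fin, nsmul_eq_mul]
        push_cast
        field_simp
        ring

/-- Corollary to Theorem 1: assuming `μ_r ≤ μ_{K_a}` for all `r ≤ K_a`, the false-alarm
probability (the probability that some non-transmitted message is accepted) is at most
`(M-K_a) Σ_{i=0}^{t} C(L,i)(1-μ_{K_a})^i μ_{K_a}^{L-i} + p'`, where
`p' = 1 - ∏_{i=0}^{K_a-1}(1 - i/M)` is the collision probability of the messages. -/
theorem stmt10 (M L Q Ka t : ℕ) (hM : 0 < M) (hL : 0 < L) (hQ : 0 < Q) (hKa : 0 < Ka)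
    (hKaM : Ka ≤ M) (ht : t ≤ L) (pm pf : ℝ)
    (hpm : pm ∈ Set.Icc (0 : ℝ) 1) (hpf : pf ∈ Set.Icc (0 : ℝ) 1)
    (hmono : ∀ r, 1 ≤ r → r ≤ Ka → muR Q pm pf r ≤ muR Q pm pf Ka) :
    (∑ C : Fin M → Fin L → Fin Q, ∑ W : Fin Ka → Fin M, ∑ n : Fin L → Fin Q → Bool × Bool,
      ((1 / (Q : ℝ) ^ (M * L)) * (1 / (M : ℝ) ^ Ka) * noiseWeight pm pf n) *
        (if ∃ mm : Fin M, (∀ u, W u ≠ mm) ∧ missCount C W n mm ≤ t then (1 : ℝ) else 0))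
    ≤ ((M : ℝ) - (Ka : ℝ)) *
        (∑ i ∈ Finset.range (t + 1),
          (L.choose i : ℝ) * (1 - muR Q pm pf Ka) ^ i * (muR Q pm pf Ka) ^ (L - i))
      + (1 - ∏ i ∈ Finset.range Ka, (1 - (i : ℝ) / (M : ℝ))) :=
  stmt10_general M L Q Ka t hM hQ hKaM ht pm pf hpm hpf
end

section
/- (Guruswami–Sudan list-recovery success condition.) Let C be an [L, k_O] Reed–Solomon code over F_Q with distinct evaluation points β_1,...,β_L, and let M be a Q×L multiplicity matrix with nonnegative integer entries and cost C(M) = (1/2) Σ_{i,j} m_{i,j}(m_{i,j}+1). If a codeword c = (f(β_1),...,f(β_L)) with deg f < k_O satisfies ⟨M, C_c⟩ ≥ √(2(k_O-1) C(M)), where C_c is the 0/1 matrix of c and ⟨·,·⟩ is the entrywise dot product, then any nonzero bivariate polynomial Q(x,y) of (1, k_O-1)-weighted degree less than √(2(k_O-1) C(M)) that passes through each point (β_j, α_i) with multiplicity m_{i,j} has y - f(x) as a factor. -/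
open MvPolynomial

/-- The polynomial `P(x+β, y+α)` (variables `0 ↦ x`, `1 ↦ y`). -/
noncomputable def shiftAt {F : Type*} [CommRing F] (β α : F)
    (P : MvPolynomial (Fin 2) F) : MvPolynomial (Fin 2) F :=
  MvPolynomial.bind₁
    (fun i => MvPolynomial.X i + MvPolynomial.C (if i = 0 then β else α)) P

/-- `P` passes through the point `(β, α)` with multiplicity `m`: all Hasse derivatives of
total order `< m` vanish there, i.e. `P(x+β, y+α)` has no monomial of total degree `< m`. -/
def passesWithMult {F : Type*} [CommRing F] (P : MvPolynomial (Fin 2) F)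
    (β α : F) (m : ℕ) : Prop :=
  ∀ d : Fin 2 →₀ ℕ, d 0 + d 1 < m → MvPolynomial.coeff d (shiftAt β α P) = 0

/-!
Substituting `y := f(x)` turns `P` into a univariate polynomial `q = P(x, f(x))` whose degree
is at most the `(1, k_O - 1)`-weighted degree of `P`. Writing `P` around `(β_j, f(β_j))`, every
monomial has total degree `≥ m_j` and both `x - β_j` and `f(x) - f(β_j)` are divisible by
`x - β_j`, so `(x - β_j)^{m_j} ∣ q`. Hence `q` has at least `⟨M, C_c⟩` roots counted with
multiplicity, more than its degree, so `q = 0`; and `y - f(x)` always divides `P - P(x, f(x))`.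
-/

open scoped Polynomial

namespace MvPolynomial

variable {σ R : Type*}

lemma dvd_aeval_sub_aeval {S : Type*} [CommSemiring R] [CommRing S] [Algebra R S]
    {φ ψ : σ → S} {p : S} (h : ∀ i, p ∣ φ i - ψ i) (Q : MvPolynomial σ R) :
    p ∣ aeval φ Q - aeval ψ Q := by
  induction Q using MvPolynomial.induction_on with
  | C a => simp
  | add Q₁ Q₂ h₁ h₂ => simpa only [map_add, add_sub_add_comm] using dvd_add h₁ h₂
  | mul_X Q i hQ =>
    have : aeval φ (Q * X i) - aeval ψ (Q * X i)
        = (aeval φ Q - aeval ψ Q) * φ i + aeval ψ Q * (φ i - ψ i) := by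
      simp only [map_mul, aeval_X]; ring
    rw [this]
    exact dvd_add (hQ.mul_right _) ((h i).mul_left _)

lemma pow_dvd_aeval_of_le_degree {S : Type*} [CommSemiring R] [CommSemiring S]
    [Algebra R S] {φ : σ → S} {p : S} (hφ : ∀ i, p ∣ φ i) {m : ℕ} {Q : MvPolynomial σ R}
    (hQ : ∀ d ∈ Q.support, m ≤ d.degree) : p ^ m ∣ aeval φ Q := by
  rw [Q.as_sum, map_sum]
  refine Finset.dvd_sum fun d hd => ?_
  rw [aeval_monomial]
  refine Dvd.dvd.mul_left ?_ _
  calc p ^ m ∣ p ^ d.degree := pow_dvd_pow p (hQ d hd)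
    _ = d.prod fun i k => p ^ k := by
      rw [Finsupp.degree_apply, ← Finset.prod_pow_eq_pow_sum]; rfl
    _ ∣ d.prod fun i k => φ i ^ k :=
      Finset.prod_dvd_prod_of_dvd _ _ fun i _ => pow_dvd_pow_of_dvd (hφ i) _

lemma natDegree_aeval_le_weightedTotalDegree [CommSemiring R] {w : σ → ℕ}
    {φ : σ → R[X]} (hφ : ∀ i, (φ i).natDegree ≤ w i) (P : MvPolynomial σ R) :
    (aeval φ P).natDegree ≤ weightedTotalDegree w P := by
  conv_lhs => rw [P.as_sum, map_sum]
  refine Polynomial.natDegree_sum_le_of_forall_le _ _ fun d hd => ?_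
  rw [aeval_monomial, ← Polynomial.C_eq_algebraMap]
  calc _ ≤ (d.prod fun i k => φ i ^ k).natDegree := Polynomial.natDegree_C_mul_le _ _
    _ ≤ ∑ i ∈ d.support, d i * w i := by
      refine (Polynomial.natDegree_prod_le _ _).trans (Finset.sum_le_sum fun i _ => ?_)
      exact Polynomial.natDegree_pow_le.trans (Nat.mul_le_mul_left _ (hφ i))
    _ = Finsupp.weight w d := by simp [Finsupp.weight_apply, Finsupp.sum]
    _ ≤ weightedTotalDegree w P := le_weightedTotalDegree w hd

end MvPolynomial

lemma X_sub_aeval_dvd_of_aeval_eq_zero {R : Type*} [CommRing R] {f : R[X]}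
    {P : MvPolynomial (Fin 2) R} (h : aeval ![Polynomial.X, f] P = 0) :
    (X 1 - Polynomial.aeval (X 0 : MvPolynomial (Fin 2) R) f) ∣ P := by
  have key := dvd_aeval_sub_aeval (R := R) (S := MvPolynomial (Fin 2) R)
    (φ := X) (ψ := fun i => Polynomial.aeval (X 0) (![Polynomial.X, f] i))
    (p := X 1 - Polynomial.aeval (X 0) f) (by simp [Fin.forall_fin_two]) P
  rwa [aeval_X_left_apply, ← comp_aeval_apply, h, map_zero, sub_zero] at key

lemma pow_X_sub_C_dvd_aeval_of_passesWithMult {R : Type*} [CommRing R] (f : R[X])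
    {P : MvPolynomial (Fin 2) R} {b : R} {m : ℕ} (h : passesWithMult P b (f.eval b) m) :
    (Polynomial.X - Polynomial.C b) ^ m ∣ aeval ![Polynomial.X, f] P := by
  have hshift : aeval ![Polynomial.X, f] P
      = aeval ![Polynomial.X - Polynomial.C b, f - Polynomial.C (f.eval b)]
          (shiftAt b (f.eval b) P) := by
    rw [shiftAt, aeval_bind₁]
    congr 2
    funext i
    fin_cases i <;> simp
  rw [hshift]
  refine pow_dvd_aeval_of_le_degree ?_ fun d hd => ?_
  · simpa [Fin.forall_fin_two] using Polynomial.X_sub_C_dvd_sub_C_eval (p := f) (a := b)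
  · by_contra! hlt
    exact mem_support_iff.1 hd
      (h d (by simpa [Finsupp.degree_eq_sum, Fin.sum_univ_two] using hlt))

lemma Polynomial.sum_le_natDegree_of_pow_X_sub_C_dvd {K ι : Type*} [Field K] [Fintype ι]
    {β : ι → K} (hβ : Function.Injective β) {m : ι → ℕ} {q : K[X]} (hq : q ≠ 0)
    (h : ∀ j, (Polynomial.X - Polynomial.C (β j)) ^ m j ∣ q) : ∑ j, m j ≤ q.natDegree := by
  have hprod : ∏ j, (Polynomial.X - Polynomial.C (β j)) ^ m j ∣ q :=
    Finset.prod_dvd_of_coprime (fun i _ j _ hij => (pairwise_coprime_X_sub_C hβ hij).pow)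
      fun j _ => h j
  simpa [natDegree_prod _ _ fun j _ => pow_ne_zero _ (X_sub_C_ne_zero (β j))]
    using natDegree_le_of_dvd hprod hq

theorem stmt14_general {F : Type*} [Field F] (L kO : ℕ)
    (β : Fin L → F) (hβ : Function.Injective β)
    (mMat : F → Fin L → ℕ)
    (f : Polynomial F) (hf : f.natDegree < kO)
    (costM : ℝ)
    (hdot : Real.sqrt (2 * ((kO : ℝ) - 1) * costM)
      ≤ ∑ j : Fin L, (mMat (Polynomial.eval (β j) f) j : ℝ))
    (P : MvPolynomial (Fin 2) F)
    (hw : ((MvPolynomial.weightedTotalDegree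
        (fun i : Fin 2 => if i = 0 then 1 else kO - 1) P : ℕ) : ℝ)
      < Real.sqrt (2 * ((kO : ℝ) - 1) * costM))
    (hmult : ∀ (a : F) (j : Fin L), passesWithMult P (β j) a (mMat a j)) :
    (MvPolynomial.X 1 - Polynomial.aeval (MvPolynomial.X 0 : MvPolynomial (Fin 2) F) f) ∣ P := by
  refine X_sub_aeval_dvd_of_aeval_eq_zero (by_contra fun hq => ?_)
  have hroots := Polynomial.sum_le_natDegree_of_pow_X_sub_C_dvd hβ hq
    fun j => pow_X_sub_C_dvd_aeval_of_passesWithMult f (hmult _ j)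
  have hdeg := natDegree_aeval_le_weightedTotalDegree
    (w := fun i : Fin 2 => if i = 0 then 1 else kO - 1) (φ := ![Polynomial.X, f])
    (by simpa [Fin.forall_fin_two] using Nat.le_sub_one_of_lt hf) P
  have hlt := hw.trans_le hdot
  norm_cast at hlt
  omega

/-- Guruswami–Sudan list-recovery success condition: if the codeword
`(f(β_1),…,f(β_L))` of the `[L,k_O]` Reed–Solomon code satisfies
`⟨M, C_c⟩ ≥ √(2(k_O-1)·C(M))`, then any nonzero bivariate polynomial `P` of
`(1, k_O-1)`-weighted degree `< √(2(k_O-1)·C(M))` passing through each point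
`(β_j, α)` with multiplicity `m_{α,j}` is divisible by `y - f(x)`. -/
theorem stmt14 {F : Type*} [Field F] [Fintype F] (L kO : ℕ) (hL : 0 < L) (hkO : 1 ≤ kO)
    (β : Fin L → F) (hβ : Function.Injective β)
    (mMat : F → Fin L → ℕ)
    (f : Polynomial F) (hf : f.natDegree < kO)
    (costM : ℝ)
    (hcost : costM = (1 / 2) * ∑ a : F, ∑ j : Fin L, (mMat a j : ℝ) * ((mMat a j : ℝ) + 1))
    (hdot : Real.sqrt (2 * ((kO : ℝ) - 1) * costM)
      ≤ ∑ j : Fin L, (mMat (Polynomial.eval (β j) f) j : ℝ))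
    (P : MvPolynomial (Fin 2) F) (hP : P ≠ 0)
    (hw : ((MvPolynomial.weightedTotalDegree
        (fun i : Fin 2 => if i = 0 then 1 else kO - 1) P : ℕ) : ℝ)
      < Real.sqrt (2 * ((kO : ℝ) - 1) * costM))
    (hmult : ∀ (a : F) (j : Fin L), passesWithMult P (β j) a (mMat a j)) :
    (MvPolynomial.X 1 - Polynomial.aeval (MvPolynomial.X 0 : MvPolynomial (Fin 2) F) f) ∣ P :=
  stmt14_general L kO β hβ mMat f hf costM hdot P hw hmult
end

section
/- (Guruswami–Sudan list size bound.) Any bivariate polynomial Q(x,y) of (1, k_O-1)-weighted degree at most √(2(k_O-1) C(M)) has at most √(2 C(M)/(k_O-1)) factors of the form y - f(x) with deg f < k_O; consequently the output list size satisfies L(M) ≤ √(2 C(M)/(k_O-1)). -/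
open MvPolynomial

/-- Guruswami–Sudan list size bound: a nonzero bivariate polynomial of
`(1, k_O-1)`-weighted degree at most `√(2(k_O-1)·C(M))` has at most
`√(2·C(M)/(k_O-1))` factors of the form `y - f(x)` with `deg f < k_O`. -/
theorem stmt17 {F : Type*} [Field F] (kO : ℕ) (hkO : 2 ≤ kO) (costM : ℝ) (hc : 0 < costM)
    (P : MvPolynomial (Fin 2) F) (hP : P ≠ 0)
    (hw : ((MvPolynomial.weightedTotalDegree
        (fun i : Fin 2 => if i = 0 then 1 else kO - 1) P : ℕ) : ℝ)
      ≤ Real.sqrt (2 * ((kO : ℝ) - 1) * costM)) :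
    ((Set.ncard {f : Polynomial F | f.natDegree < kO ∧
        (MvPolynomial.X 1 - Polynomial.aeval (MvPolynomial.X 0 : MvPolynomial (Fin 2) F) f)
          ∣ P} : ℕ) : ℝ)
      ≤ Real.sqrt (2 * costM / ((kO : ℝ) - 1)) := by
  classical
  set w : Fin 2 → ℕ := fun i : Fin 2 => if i = 0 then 1 else kO - 1 with hwdef
  set D := weightedTotalDegree w P with hD
  set d := degreeOf 1 P with hd
  have hk1 : 1 ≤ kO - 1 := by omega
  -- Step 1: y-degree bound
  have hdD : d * (kO - 1) ≤ D := by
    have h1 : d ≤ D / (kO - 1) := by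
      rw [hd, degreeOf_le_iff]
      intro m hm
      rw [Nat.le_div_iff_mul_le (by omega : 0 < kO - 1)]
      refine le_trans ?_ (le_weightedTotalDegree w hm)
      have : m 1 * w 1 ≤ Finsupp.weight w m := by
        rw [Finsupp.weight_apply]
        by_cases h : m 1 = 0
        · simp [h]
        · exact Finset.single_le_sum (f := fun i => m i • w i)
            (fun i _ => Nat.zero_le _) (Finsupp.mem_support_iff.mpr h)
      simpa [hwdef] using this
    calc d * (kO - 1) ≤ (D / (kO - 1)) * (kO - 1) := Nat.mul_le_mul_right _ h1
      _ ≤ D := Nat.div_mul_le_self _ _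
  -- Step 2: map to Polynomial (MvPolynomial (Fin 1) F)
  set σ := Equiv.swap (0 : Fin 2) 1 with hσ
  set Q := finSuccEquiv F 1 (rename σ P) with hQdef
  have hrP : rename σ P ≠ 0 := fun h => hP (by
    have := congrArg (rename σ.symm) h
    simpa [rename_rename, Function.comp] using this)
  have hQ0 : Q ≠ 0 := by
    simp only [hQdef]
    exact fun h => hrP ((map_eq_zero_iff _ (AlgEquiv.injective _)).mp h)
  have hdeg : Q.natDegree = d := by
    rw [hQdef, natDegree_finSuccEquiv, hd]
    have := degreeOf_rename_of_injective (σ.injective) (p := P) 1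
    simpa [hσ, Equiv.swap_apply_right] using this
  -- the embedding of constants
  set g : Polynomial F → MvPolynomial (Fin 1) F :=
    fun f => Polynomial.aeval (X 0 : MvPolynomial (Fin 1) F) f with hg
  have hginj : Function.Injective g := by
    have : Function.LeftInverse
        (fun q => MvPolynomial.aeval (fun _ : Fin 1 => (Polynomial.X : Polynomial F)) q) g := by
      intro f
      show (MvPolynomial.aeval fun _ : Fin 1 => (Polynomial.X : Polynomial F))
        ((Polynomial.aeval (X 0 : MvPolynomial (Fin 1) F)) f) = f
      rw [← Polynomial.aeval_algHom_apply]
      simp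
    exact this.injective
  set S := {f : Polynomial F | f.natDegree < kO ∧
      (MvPolynomial.X 1 - Polynomial.aeval (MvPolynomial.X 0 : MvPolynomial (Fin 2) F) f) ∣ P}
    with hS
  have hroot : ∀ f ∈ S, Q.IsRoot (g f) := by
    intro f hf
    rw [← Polynomial.dvd_iff_isRoot]
    have hdvd := hf.2
    have h1 : (Polynomial.X - Polynomial.C (g f)) =
        finSuccEquiv F 1 (rename σ (MvPolynomial.X 1 -
          Polynomial.aeval (MvPolynomial.X 0 : MvPolynomial (Fin 2) F) f)) := by
      rw [map_sub, map_sub]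
      congr 1
      · rw [rename_X]
        have : σ (1 : Fin 2) = 0 := Equiv.swap_apply_right 0 1
        rw [this, finSuccEquiv_X_zero]
      · have e1 : (rename (σ : Fin 2 → Fin 2)) ((Polynomial.aeval (X 0 : MvPolynomial (Fin 2) F)) f)
            = Polynomial.aeval (X (1 : Fin 2) : MvPolynomial (Fin 2) F) f := by
          rw [← Polynomial.aeval_algHom_apply]
          simp [hσ]
        rw [e1]
        have e2 : (MvPolynomial.finSuccEquiv F 1)
              ((Polynomial.aeval (X (1 : Fin 2) : MvPolynomial (Fin 2) F)) f)
            = Polynomial.aeval ((MvPolynomial.finSuccEquiv F 1) (X (1 : Fin 2))) f := by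
          exact (Polynomial.aeval_algHom_apply (MvPolynomial.finSuccEquiv F 1).toAlgHom
            (X (1 : Fin 2)) f).symm
        rw [e2]
        have h2 : (MvPolynomial.finSuccEquiv F 1) (X (1 : Fin 2))
            = Polynomial.C (X (0 : Fin 1)) := by
          have h3 : (1 : Fin 2) = (0 : Fin 1).succ := rfl
          rw [h3, finSuccEquiv_X_succ]
        rw [h2, hg]
        have := Polynomial.aeval_algHom_apply (Polynomial.CAlgHom
          (A := MvPolynomial (Fin 1) F) (R := F)) (X (0 : Fin 1)) f
        simpa [Polynomial.CAlgHom] using this.symm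
    rw [h1, hQdef]
    exact map_dvd _ (map_dvd _ hdvd)
  -- Step 3: counting
  have hcard : S.ncard ≤ d := by
    have himg : g '' S ⊆ ↑Q.roots.toFinset := by
      rintro _ ⟨f, hf, rfl⟩
      simp only [Finset.coe_sort_coe, Multiset.mem_toFinset, Finset.mem_coe]
      exact (Polynomial.mem_roots hQ0).mpr (hroot f hf)
    calc S.ncard = (g '' S).ncard := (Set.ncard_image_of_injective S hginj).symm
      _ ≤ (↑Q.roots.toFinset : Set (MvPolynomial (Fin 1) F)).ncard :=
          Set.ncard_le_ncard himg (Q.roots.toFinset.finite_toSet)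
      _ = Q.roots.toFinset.card := Set.ncard_coe_finset _
      _ ≤ Multiset.card Q.roots := Multiset.toFinset_card_le _
      _ ≤ Q.natDegree := Polynomial.card_roots' Q
      _ = d := hdeg
  -- Step 4: numerics
  have hk : (0:ℝ) < (kO:ℝ) - 1 := by
    have : (2:ℝ) ≤ (kO:ℝ) := by exact_mod_cast hkO
    linarith
  have hkcast : ((kO - 1 : ℕ) : ℝ) = (kO:ℝ) - 1 := by
    have : (1:ℕ) ≤ kO := by omega
    push_cast [this]; ring
  have hchain : (S.ncard : ℝ) * ((kO:ℝ) - 1) ≤ Real.sqrt (2 * ((kO : ℝ) - 1) * costM) := by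
    calc (S.ncard : ℝ) * ((kO:ℝ) - 1) ≤ (d : ℝ) * ((kO:ℝ) - 1) := by
          have : (S.ncard : ℝ) ≤ (d : ℝ) := by exact_mod_cast hcard
          nlinarith
      _ ≤ (D : ℝ) := by
          rw [← hkcast]
          exact_mod_cast hdD
      _ ≤ _ := hw
  have hsqrt : Real.sqrt (2 * ((kO : ℝ) - 1) * costM)
      = ((kO:ℝ) - 1) * Real.sqrt (2 * costM / ((kO : ℝ) - 1)) := by
    rw [show (2 * ((kO : ℝ) - 1) * costM) = ((kO:ℝ)-1)^2 * (2 * costM / ((kO : ℝ) - 1)) by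
      field_simp]
    rw [Real.sqrt_mul (sq_nonneg _), Real.sqrt_sq hk.le]
  rw [hsqrt] at hchain
  exact le_of_mul_le_mul_right (by linarith [hchain]) hk
end
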